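/- Gain monotonicity: with notation as above, ∂J/∂a (φ, a) = cos(φ) · (1/(2π)) ∫₀^{2π} v(τ)^⊤ ∇σ(a v(τ)) v(τ) dτ, which is nonnegative whenever cos(φ) ≥ 0. Hence for fixed phase φ with cos φ ≥ 0, J(φ,·) is nondecreasing in a. -/

import Mathlib

open Real Matrix

noncomputable def softmax {n : ℕ} (v : Fin n → ℝ) : Fin n → ℝ :=
  fun i => Real.exp (v i) / ∑ j, Real.exp (v j)

/-- The Jacobian of softmax: `diag(σ(v)) − σ(v)σ(v)ᵀ`. -/
noncomputable def softmaxJac {n : ℕ} (v : Fin n → ℝ) : Matrix (Fin n) (Fin n) ℝ :=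
  Matrix.diagonal (softmax v) - Matrix.of fun i j => softmax v i * softmax v j

/-- Average reward `J(φ, a)` under the sinusoidal payoff environment. -/
noncomputable def avgReward {n : ℕ} (pbar qbar : Fin n → ℝ) (φ a : ℝ) : ℝ :=
  (1 / (2 * π)) * ∫ u in (0:ℝ)..(2 * π),
    ∑ i, (Real.sin u * pbar i + Real.cos u * qbar i) *
      softmax (a • (Real.sin (u - φ) • pbar + Real.cos (u - φ) • qbar)) i

/-!
Differentiating under the integral sign, `∂J/∂a` is the average of
`v(u)ᵀ ∇σ(a v(u - φ)) v(u - φ)`. Shifting by the phase and writing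
`v(τ + φ) = cos φ · v(τ) + sin φ · v'(τ)` splits it into `cos φ` times the average of the
quadratic form `v ⬝ᵥ ∇σ(a v) v`, which is nonnegative because `∇σ` is a covariance matrix, plus
`sin φ` times the cross term `∫ v' ⬝ᵥ ∇σ(a v) v`, which vanishes over a period because the integrand
is an exact derivative.
-/

lemma hasDerivAt_intervalIntegral_of_continuous {E : Type*} [NormedAddCommGroup E]
    [NormedSpace ℝ E] [CompleteSpace E] {F F' : ℝ → ℝ → E} {t₀ t₁ x₀ : ℝ}
    (hF : Continuous F.uncurry) (hF' : Continuous F'.uncurry)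
    (hderiv : ∀ x t, HasDerivAt (fun x => F x t) (F' x t) x) :
    HasDerivAt (fun x => ∫ t in t₀..t₁, F x t) (∫ t in t₀..t₁, F' x₀ t) x₀ := by
  obtain ⟨C, hC⟩ := ((isCompact_closedBall x₀ 1).prod
    (isCompact_uIcc (a := t₀) (b := t₁))).exists_bound_of_continuousOn hF'.continuousOn
  refine (intervalIntegral.hasDerivAt_integral_of_dominated_loc_of_deriv_le (bound := fun _ => C)
    (Metric.closedBall_mem_nhds x₀ one_pos) (.of_forall fun x => ?_) ?_ ?_ ?_
    intervalIntegrable_const (.of_forall fun t _ x _ => hderiv x t)).2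
  · exact (hF.comp (Continuous.prodMk_right x)).aestronglyMeasurable
  · exact (hF.comp (Continuous.prodMk_right x₀)).intervalIntegrable t₀ t₁
  · exact (hF'.comp (Continuous.prodMk_right x₀)).aestronglyMeasurable
  · exact .of_forall fun t ht x hx => hC (x, t) ⟨hx, Set.uIoc_subset_uIcc ht⟩

variable {n : ℕ}

lemma sum_exp_pos [Nonempty (Fin n)] (v : Fin n → ℝ) : 0 < ∑ j, exp (v j) :=
  Finset.sum_pos (fun _ _ => exp_pos _) Finset.univ_nonempty

lemma sum_softmax [Nonempty (Fin n)] (v : Fin n → ℝ) : ∑ i, softmax v i = 1 := by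
  simp only [softmax, ← Finset.sum_div]
  exact div_self (sum_exp_pos v).ne'

lemma softmax_dotProduct (y x : Fin n → ℝ) :
    softmax y ⬝ᵥ x = (∑ j, exp (y j) * x j) / ∑ j, exp (y j) := by
  simp only [dotProduct, softmax, Finset.sum_div]
  exact Finset.sum_congr rfl fun j _ => by ring

lemma softmaxJac_mulVec_apply (y x : Fin n → ℝ) (i : Fin n) :
    (softmaxJac y *ᵥ x) i = softmax y i * x i - softmax y i * (softmax y ⬝ᵥ x) := by
  rw [softmaxJac, sub_mulVec, Pi.sub_apply, mulVec_diagonal]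
  simp [mulVec, dotProduct, Finset.mul_sum, mul_assoc]

lemma dotProduct_softmaxJac_mulVec (y w x : Fin n → ℝ) :
    w ⬝ᵥ softmaxJac y *ᵥ x =
      ∑ i, softmax y i * (w i * x i) - (softmax y ⬝ᵥ w) * (softmax y ⬝ᵥ x) := by
  simp only [dotProduct, softmaxJac_mulVec_apply, mul_sub, Finset.sum_sub_distrib, Finset.sum_mul]
  congr 1 <;> exact Finset.sum_congr rfl fun i _ => by ring

lemma dotProduct_softmaxJac_mulVec_comm (y w x : Fin n → ℝ) :
    w ⬝ᵥ softmaxJac y *ᵥ x = x ⬝ᵥ softmaxJac y *ᵥ w := by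
  simp only [dotProduct_softmaxJac_mulVec, mul_comm (w _), mul_comm (softmax y ⬝ᵥ w)]

lemma isHermitian_softmaxJac (y : Fin n → ℝ) : (softmaxJac y).IsHermitian := by
  ext i j
  by_cases h : i = j
  · subst h; rfl
  · simp [softmaxJac, diagonal_apply_ne _ h, diagonal_apply_ne _ (Ne.symm h), mul_comm]

lemma dotProduct_softmaxJac_mulVec_self [Nonempty (Fin n)] (y w : Fin n → ℝ) :
    w ⬝ᵥ softmaxJac y *ᵥ w = ∑ i, softmax y i * (w i - softmax y ⬝ᵥ w) ^ 2 := by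
  have hcross : ∑ i, softmax y i * (2 * w i * (softmax y ⬝ᵥ w)) = 2 * (softmax y ⬝ᵥ w) ^ 2 := by
    calc _ = (∑ i, softmax y i * w i) * (2 * (softmax y ⬝ᵥ w)) := by
          rw [Finset.sum_mul]; exact Finset.sum_congr rfl fun i _ => by ring
      _ = _ := by rw [← dotProduct]; ring
  simp only [dotProduct_softmaxJac_mulVec, sub_sq, mul_add, mul_sub, Finset.sum_add_distrib,
    Finset.sum_sub_distrib, ← Finset.sum_mul, sum_softmax, hcross, ← sq]
  ring

lemma posSemidef_softmaxJac (y : Fin n → ℝ) : (softmaxJac y).PosSemidef := by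
  refine .of_dotProduct_mulVec_nonneg (isHermitian_softmaxJac y) fun w => ?_
  rcases isEmpty_or_nonempty (Fin n) with _ | _
  · simp [dotProduct]
  · rw [star_trivial, dotProduct_softmaxJac_mulVec_self]
    exact Finset.sum_nonneg fun i _ =>
      mul_nonneg (div_nonneg (exp_pos _).le (sum_exp_pos y).le) (sq_nonneg _)

lemma continuous_softmax : Continuous (softmax : (Fin n → ℝ) → Fin n → ℝ) :=
  continuous_pi fun i =>
    have : Nonempty (Fin n) := ⟨i⟩
    ((continuous_apply i).rexp).div (continuous_finsetSum _ fun j _ => (continuous_apply j).rexp)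
      fun y => (sum_exp_pos y).ne'

lemma continuous_softmaxJac : Continuous (softmaxJac : (Fin n → ℝ) → Matrix (Fin n) (Fin n) ℝ) :=
  continuous_softmax.matrix_diagonal.sub (continuous_softmax.matrix_vecMulVec continuous_softmax)

section Deriv

variable {c : ℝ → Fin n → ℝ} {c' : Fin n → ℝ} {t : ℝ}

lemma HasDerivAt.dotProduct {d : ℝ → Fin n → ℝ} {d' : Fin n → ℝ} (hc : HasDerivAt c c' t)
    (hd : HasDerivAt d d' t) :
    HasDerivAt (fun s => c s ⬝ᵥ d s) (c' ⬝ᵥ d t + c t ⬝ᵥ d') t := by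
  simp only [_root_.dotProduct, ← Finset.sum_add_distrib]
  exact HasDerivAt.fun_sum fun i _ => (hasDerivAt_pi.1 hc i).mul (hasDerivAt_pi.1 hd i)

lemma HasDerivAt.log_sum_exp (hc : HasDerivAt c c' t) :
    HasDerivAt (fun s => Real.log (∑ j, Real.exp (c s j))) (softmax (c t) ⬝ᵥ c') t := by
  rcases isEmpty_or_nonempty (Fin n) with _ | _
  · simpa using hasDerivAt_const t (0 : ℝ)
  have hsum := HasDerivAt.fun_sum fun j (_ : j ∈ Finset.univ) => (hasDerivAt_pi.1 hc j).exp
  exact (hsum.log (sum_exp_pos (c t)).ne').congr_deriv (softmax_dotProduct _ _).symm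

lemma HasDerivAt.softmax (hc : HasDerivAt c c' t) :
    HasDerivAt (fun s => _root_.softmax (c s)) (softmaxJac (c t) *ᵥ c') t := by
  refine hasDerivAt_pi.2 fun i => ?_
  have : Nonempty (Fin n) := ⟨i⟩
  have hS := HasDerivAt.fun_sum fun j (_ : j ∈ Finset.univ) => (hasDerivAt_pi.1 hc j).exp
  refine (((hasDerivAt_pi.1 hc i).exp).div hS (sum_exp_pos (c t)).ne').congr_deriv ?_
  rw [softmaxJac_mulVec_apply, softmax_dotProduct]
  simp only [_root_.softmax]
  field_simp

end Deriv

section CrossTerm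

variable {c c' : ℝ → Fin n → ℝ} {t₀ t₁ : ℝ}

lemma continuous_deriv_dotProduct_softmaxJac_mulVec (hc : Continuous c) (hc' : Continuous c') :
    Continuous fun p : ℝ × ℝ => c' p.2 ⬝ᵥ softmaxJac (p.1 • c p.2) *ᵥ c p.2 :=
  (hc'.comp continuous_snd).dotProduct <|
    (continuous_softmaxJac.comp (continuous_fst.smul (hc.comp continuous_snd))).matrix_mulVec
      (hc.comp continuous_snd)

/-- The integrand is `a⁻²` times the derivative of `a (c ⬝ᵥ σ(a c)) - log ∑ exp (a c)`. -/
lemma integral_deriv_dotProduct_softmaxJac_mulVec_eq_zero_of_ne_zero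
    (hc : ∀ t, HasDerivAt c (c' t) t) (hc' : Continuous c') (hc₀₁ : c t₁ = c t₀) {a : ℝ}
    (ha : a ≠ 0) : ∫ t in t₀..t₁, c' t ⬝ᵥ softmaxJac (a • c t) *ᵥ c t = 0 := by
  have hH : ∀ t, HasDerivAt
      (fun s => a * (c s ⬝ᵥ softmax (a • c s)) - Real.log (∑ j, Real.exp ((a • c s) j)))
      (a ^ 2 * (c' t ⬝ᵥ softmaxJac (a • c t) *ᵥ c t)) t := fun t => by
    have hac : HasDerivAt (fun s => a • c s) (a • c' t) t := (hc t).const_smul a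
    refine (((hc t).dotProduct hac.softmax).const_mul a |>.sub hac.log_sum_exp).congr_deriv ?_
    rw [dotProduct_softmaxJac_mulVec_comm, smul_dotProduct, dotProduct_smul,
      dotProduct_comm (c' t)]
    simp only [smul_eq_mul]
    ring
  have hcont : Continuous c := continuous_iff_continuousAt.2 fun t => (hc t).continuousAt
  have hint := intervalIntegral.integral_eq_sub_of_hasDerivAt (fun t _ => hH t)
    ((continuous_const.mul ((continuous_deriv_dotProduct_softmaxJac_mulVec hcont hc').comp
      (Continuous.prodMk_right a))).intervalIntegrable t₀ t₁)
  rw [intervalIntegral.integral_const_mul, hc₀₁, sub_self] at hint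
  exact (mul_eq_zero.1 hint).resolve_left (pow_ne_zero 2 ha)

lemma integral_deriv_dotProduct_softmaxJac_mulVec_eq_zero (hc : ∀ t, HasDerivAt c (c' t) t)
    (hc' : Continuous c') (hc₀₁ : c t₁ = c t₀) (a : ℝ) :
    ∫ t in t₀..t₁, c' t ⬝ᵥ softmaxJac (a • c t) *ᵥ c t = 0 := by
  have hcont : Continuous c := continuous_iff_continuousAt.2 fun t => (hc t).continuousAt
  refine congrFun (Continuous.ext_on (dense_compl_singleton (0 : ℝ)) ?_ continuous_const
    fun b hb => integral_deriv_dotProduct_softmaxJac_mulVec_eq_zero_of_ne_zero hc hc' hc₀₁ hb) a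
  exact intervalIntegral.continuous_parametric_intervalIntegral_of_continuous'
    (continuous_deriv_dotProduct_softmaxJac_mulVec hcont hc') t₀ t₁

end CrossTerm

lemma hasDerivAt_dotProduct_softmax_smul (x w : Fin n → ℝ) (a : ℝ) :
    HasDerivAt (fun a => x ⬝ᵥ softmax (a • w)) (x ⬝ᵥ softmaxJac (a • w) *ᵥ w) a := by
  have hw : HasDerivAt (fun a : ℝ => a • w) w a := by
    simpa using (hasDerivAt_id a).smul_const w
  simpa using (hasDerivAt_const a x).dotProduct hw.softmax

section Sinusoid

variable {E : Type*} [AddCommGroup E] [Module ℝ E]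

noncomputable def sinusoid (p q : E) (τ : ℝ) : E :=
  sin τ • p + cos τ • q

variable (p q : E)

lemma periodic_sinusoid : Function.Periodic (sinusoid p q) (2 * π) := fun τ => by
  simp [sinusoid]

lemma sinusoid_add (τ φ : ℝ) :
    sinusoid p q (τ + φ) = cos φ • sinusoid p q τ + sin φ • (cos τ • p - sin τ • q) := by
  simp only [sinusoid, sin_add, cos_add, smul_add, smul_sub, smul_smul, add_smul, sub_smul]
  module

end Sinusoid

section SinusoidDeriv

variable {E : Type*} [NormedAddCommGroup E] [NormedSpace ℝ E] (p q : E)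

lemma hasDerivAt_sinusoid (τ : ℝ) : HasDerivAt (sinusoid p q) (cos τ • p - sin τ • q) τ :=
  (((hasDerivAt_sin τ).smul_const p).fun_add ((hasDerivAt_cos τ).smul_const q)).congr_deriv
    (by rw [neg_smul, sub_eq_add_neg])

@[fun_prop]
lemma continuous_sinusoid : Continuous (sinusoid p q) := by
  unfold sinusoid
  fun_prop

end SinusoidDeriv

section AvgReward

variable (p q : Fin n → ℝ) (φ a : ℝ)

lemma hasDerivAt_avgReward :
    HasDerivAt (avgReward p q φ) ((1 / (2 * π)) * ∫ u in (0 : ℝ)..(2 * π),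
      sinusoid p q u ⬝ᵥ softmaxJac (a • sinusoid p q (u - φ)) *ᵥ sinusoid p q (u - φ)) a := by
  have hv : Continuous fun u => sinusoid p q (u - φ) := by fun_prop
  refine .const_mul _ (hasDerivAt_intervalIntegral_of_continuous
    (F := fun x u => sinusoid p q u ⬝ᵥ softmax (x • sinusoid p q (u - φ))) ?_ ?_
    fun x u => hasDerivAt_dotProduct_softmax_smul _ _ x)
  · exact (continuous_sinusoid p q |>.comp continuous_snd).dotProduct
      (continuous_softmax.comp (continuous_fst.smul (hv.comp continuous_snd)))
  · exact (continuous_sinusoid p q |>.comp continuous_snd).dotProduct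
      ((continuous_softmaxJac.comp (continuous_fst.smul (hv.comp continuous_snd))).matrix_mulVec
        (hv.comp continuous_snd))

lemma integral_softmaxJac_sinusoid_sub_eq_cos_mul :
    ∫ u in (0 : ℝ)..(2 * π),
        sinusoid p q u ⬝ᵥ softmaxJac (a • sinusoid p q (u - φ)) *ᵥ sinusoid p q (u - φ) =
      cos φ * ∫ τ in (0 : ℝ)..(2 * π),
        sinusoid p q τ ⬝ᵥ softmaxJac (a • sinusoid p q τ) *ᵥ sinusoid p q τ := by
  set g : ℝ → ℝ := fun τ =>
    sinusoid p q (τ + φ) ⬝ᵥ softmaxJac (a • sinusoid p q τ) *ᵥ sinusoid p q τ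
  have hg : Function.Periodic g (2 * π) := fun τ => by
    simp only [g, add_right_comm τ, periodic_sinusoid p q _]
  have hv' : Continuous fun τ : ℝ => cos τ • p - sin τ • q := by fun_prop
  have hcross := integral_deriv_dotProduct_softmaxJac_mulVec_eq_zero (hasDerivAt_sinusoid p q)
    hv' (by simpa using periodic_sinusoid p q 0) a (t₀ := 0) (t₁ := 2 * π)
  have hQ : Continuous fun τ =>
      sinusoid p q τ ⬝ᵥ softmaxJac (a • sinusoid p q τ) *ᵥ sinusoid p q τ :=
    ((continuous_deriv_dotProduct_softmaxJac_mulVec (continuous_sinusoid p q)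
      (continuous_sinusoid p q)).comp (Continuous.prodMk_right a) :)
  have hX : Continuous fun τ =>
      (cos τ • p - sin τ • q) ⬝ᵥ softmaxJac (a • sinusoid p q τ) *ᵥ sinusoid p q τ :=
    ((continuous_deriv_dotProduct_softmaxJac_mulVec (continuous_sinusoid p q) hv').comp
      (Continuous.prodMk_right a) :)
  calc _ = ∫ u in (0 : ℝ)..(2 * π), g (u - φ) := by simp only [g, sub_add_cancel]
    _ = ∫ τ in (0 : ℝ)..(2 * π), g τ := by
      rw [intervalIntegral.integral_comp_sub_right, zero_sub, sub_eq_neg_add,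
        hg.intervalIntegral_add_eq (-φ) 0, zero_add]
    _ = ∫ τ in (0 : ℝ)..(2 * π),
          (cos φ * (sinusoid p q τ ⬝ᵥ softmaxJac (a • sinusoid p q τ) *ᵥ sinusoid p q τ) +
            sin φ * ((cos τ • p - sin τ • q) ⬝ᵥ softmaxJac (a • sinusoid p q τ) *ᵥ
              sinusoid p q τ)) := by
      simp only [g, sinusoid_add, add_dotProduct, smul_dotProduct, smul_eq_mul]
    _ = _ := by
      rw [intervalIntegral.integral_add ((hQ.const_mul _).intervalIntegrable _ _)
        ((hX.const_mul _).intervalIntegrable _ _), intervalIntegral.integral_const_mul,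
        intervalIntegral.integral_const_mul, hcross, mul_zero, add_zero]

end AvgReward

theorem gain_monotonicity (n : ℕ) (pbar qbar : Fin n → ℝ) (φ : ℝ) :
    (∀ a : ℝ,
      HasDerivAt (fun a' => avgReward pbar qbar φ a')
        (Real.cos φ * ((1 / (2 * π)) * ∫ τ in (0:ℝ)..(2 * π),
          (fun i => Real.sin τ * pbar i + Real.cos τ * qbar i) ⬝ᵥ
            (softmaxJac (a • (Real.sin τ • pbar + Real.cos τ • qbar))).mulVec
              (fun i => Real.sin τ * pbar i + Real.cos τ * qbar i))) a ∧
      (0 ≤ Real.cos φ →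
        0 ≤ Real.cos φ * ((1 / (2 * π)) * ∫ τ in (0:ℝ)..(2 * π),
          (fun i => Real.sin τ * pbar i + Real.cos τ * qbar i) ⬝ᵥ
            (softmaxJac (a • (Real.sin τ • pbar + Real.cos τ • qbar))).mulVec
              (fun i => Real.sin τ * pbar i + Real.cos τ * qbar i)))) ∧
    (0 ≤ Real.cos φ → Monotone (fun a => avgReward pbar qbar φ a)) := by
  have hderiv (a : ℝ) : HasDerivAt (avgReward pbar qbar φ) (cos φ * ((1 / (2 * π)) *
      ∫ τ in (0 : ℝ)..(2 * π), sinusoid pbar qbar τ ⬝ᵥ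
        softmaxJac (a • sinusoid pbar qbar τ) *ᵥ sinusoid pbar qbar τ)) a := by
    have h := hasDerivAt_avgReward pbar qbar φ a
    rwa [integral_softmaxJac_sinusoid_sub_eq_cos_mul, mul_left_comm] at h
  have hnonneg (a : ℝ) (hφ : 0 ≤ cos φ) : 0 ≤ cos φ * ((1 / (2 * π)) *
      ∫ τ in (0 : ℝ)..(2 * π), sinusoid pbar qbar τ ⬝ᵥ
        softmaxJac (a • sinusoid pbar qbar τ) *ᵥ sinusoid pbar qbar τ) :=
    mul_nonneg hφ <| mul_nonneg (by positivity) <| intervalIntegral.integral_nonneg (by positivity)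
      fun τ _ => by simpa using (posSemidef_softmaxJac _).dotProduct_mulVec_nonneg _
  refine ⟨fun a => ⟨hderiv a, hnonneg a⟩, fun hφ => ?_⟩
  exact monotone_of_deriv_nonneg (fun a => (hderiv a).differentiableAt)
    fun a => (hderiv a).deriv ▸ hnonneg a hφ
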